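/- (Theorem 1.) Let n ≥ 1, p ≥ 2, m ≥ 1, k ≥ 1, σ > 0, α ∈ [0,1]. Let X ∈ ℝ^{n×p} have all entries in {0,1} and nonzero columns x_1,…,x_p; let A ∈ ℝ^{p×m}; let G be a partition of {1,…,m} into nonempty groups with |G| ≤ p and with each group size p_g ≤ 2^k − 1; and assume that for each g ∈ G the matrix X_g := X A P_g ∈ ℝ^{n×m} has all entries in {0,1} and at most p_g nonzero columns, where P_g is the diagonal 0/1 matrix selecting the coordinates in g. Let ε ∈ ℝ^n be a random vector with i.i.d. N(0, σ²) entries, let γ* ∈ ℝ^m, β* = Aγ*, and y = Xβ* + ε. Set weights w̃_j = ‖x_j‖/√n for 1 ≤ j ≤ p and w_g = √(p_g/(2^k − 1)) for g ∈ G, define Ω(β, γ) = (1−α) ∑_{j=1}^p w̃_j |β_j| + α ∑_{g∈G} w_g ‖γ_g‖, and let λ ≥ 4 √(2^k − 1) σ √(log p / n). If (β̂, γ̂) minimizes (1/(2n))‖y − Xβ‖² + λ Ω(β, γ) over all (β, γ) with β = Aγ, then with probability at least 1 − 1/p − 2/p², (1/n) ‖Xβ̂ − Xβ*‖² ≤ 4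 λ Ω(β*, γ*). -/

import Mathlib

open Finset Matrix MeasureTheory ProbabilityTheory
open scoped ENNReal NNReal

/-!
On the event that every column correlation `|⟪x_j, ε⟫|` is at most `λ n w̃_j` and every group
correlation `‖((XA)ᵀ ε)_g‖` is at most `λ n w_g`, Hölder's and the Cauchy–Schwarz inequality bound
the noise term `⟪ε, X(β̂ - β*)⟫` of the basic inequality by `λ n Ω(β̂ - β*, γ̂ - γ*)`, and the
triangle inequality for `Ω` turns the basic inequality into `‖X(β̂ - β*)‖² ≤ 4 n λ Ω(β*, γ*)`.

Each correlation `⟪z, ε⟫` is `N(0, ‖z‖²σ²)`, so `E exp(a⟪z, ε⟫²) = (1 - 2a‖z‖²σ²)^(-1/2)`.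
By Jensen, the average of these over a group controls the exponential moment of the group's
squared norm, and a Chernoff bound gives a failure probability of at most `√2 p⁻⁴` per column and
per group, whatever the group size. A union bound over at most `2p` such events gives `1/p`.
-/

theorem lintegral_exp_mul_sq_gaussianReal (V : ℝ≥0) {a : ℝ} (h : 2 * a * V < 1) :
    ∫⁻ x, ENNReal.ofReal (Real.exp (a * x ^ 2)) ∂gaussianReal 0 V
      = ENNReal.ofReal (1 / √(1 - 2 * a * V)) := by
  rcases eq_or_ne V 0 with rfl | hV
  · simp [gaussianReal_zero_var]
  have hV0 : (0 : ℝ) < V := NNReal.coe_pos.mpr (pos_iff_ne_zero.mpr hV)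
  have hr : 0 < 1 - 2 * a * V := by linarith
  set b : ℝ := (1 - 2 * a * V) / (2 * V) with hb_def
  have hb : 0 < b := by positivity
  have hdens : ∀ x, gaussianPDF 0 V x * ENNReal.ofReal (Real.exp (a * x ^ 2))
      = ENNReal.ofReal ((√(2 * Real.pi * V))⁻¹ * Real.exp (-b * x ^ 2)) := by
    intro x
    rw [gaussianPDF, ← ENNReal.ofReal_mul (gaussianPDFReal_nonneg _ _ _), gaussianPDFReal,
      mul_assoc, ← Real.exp_add]
    congr 3
    rw [hb_def]
    field_simp
    ring
  rw [gaussianReal_of_var_ne_zero _ hV,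
    lintegral_withDensity_eq_lintegral_mul _ (measurable_gaussianPDF _ _) (by fun_prop)]
  simp only [Pi.mul_apply, hdens]
  rw [← ofReal_integral_eq_lintegral_ofReal ((integrable_exp_neg_mul_sq hb).const_mul _)
    (ae_of_all _ fun x => by positivity), integral_const_mul, integral_gaussian]
  congr 1
  rw [← Real.sqrt_inv, ← Real.sqrt_mul (by positivity), one_div, ← Real.sqrt_inv]
  congr 1
  rw [hb_def]
  field_simp

theorem map_dotProduct_pi_gaussianReal {ι : Type*} [Fintype ι] (V : ℝ≥0) (z : ι → ℝ) :
    (Measure.pi fun _ : ι => gaussianReal 0 V).map (fun u => u ⬝ᵥ z)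
      = gaussianReal 0 ((∑ i, z i ^ 2).toNNReal * V) := by
  have : IsProbabilityMeasure ((Measure.pi fun _ : ι => gaussianReal 0 V).map (fun u => u ⬝ᵥ z)) :=
    Measure.isProbabilityMeasure_map (by fun_prop)
  refine Measure.ext_of_charFun (funext fun t => ?_)
  have hprod : ∀ u : ι → ℝ, Complex.exp (t * ↑(u ⬝ᵥ z) * Complex.I)
      = ∏ i, Complex.exp (↑(t * z i) * u i * Complex.I) := by
    intro u
    rw [← Complex.exp_sum, dotProduct]
    push_cast
    rw [Finset.mul_sum, Finset.sum_mul]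
    exact congrArg _ (Finset.sum_congr rfl fun i _ => by ring)
  rw [charFun_apply_real, integral_map (by fun_prop) (by fun_prop)]
  simp_rw [hprod]
  rw [integral_fintype_prod_eq_prod (fun i (x : ℝ) => Complex.exp (↑(t * z i) * ↑x * Complex.I))]
  simp_rw [← charFun_apply_real, charFun_gaussianReal, ← Complex.exp_sum]
  congr 1
  rw [NNReal.coe_mul, Real.coe_toNNReal _ (by positivity)]
  push_cast
  simp only [mul_zero, zero_mul, zero_sub, Finset.sum_neg_distrib, Finset.sum_mul, Finset.sum_div]
  exact congrArg _ (Finset.sum_congr rfl fun i _ => by ring)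

theorem lintegral_exp_mul_sq_dotProduct_pi_gaussianReal {ι : Type*} [Fintype ι] (V : ℝ≥0)
    (z : ι → ℝ) {a : ℝ} (h : 2 * a * ((∑ i, z i ^ 2) * V) < 1) :
    ∫⁻ u, ENNReal.ofReal (Real.exp (a * (u ⬝ᵥ z) ^ 2)) ∂Measure.pi (fun _ : ι => gaussianReal 0 V)
      = ENNReal.ofReal (1 / √(1 - 2 * a * ((∑ i, z i ^ 2) * V))) := by
  have hvar : (((∑ i, z i ^ 2).toNNReal * V : ℝ≥0) : ℝ) = (∑ i, z i ^ 2) * V := by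
    rw [NNReal.coe_mul, Real.coe_toNNReal _ (by positivity)]
  rw [← lintegral_map (f := fun x => ENNReal.ofReal (Real.exp (a * x ^ 2))) (by fun_prop)
    (by fun_prop), map_dotProduct_pi_gaussianReal, lintegral_exp_mul_sq_gaussianReal _
    (by rwa [hvar]), hvar]

theorem lintegral_exp_mul_sq_dotProduct_pi_gaussianReal_le {ι : Type*} [Fintype ι] (V : ℝ≥0)
    (z : ι → ℝ) {a : ℝ} (h : 4 * a * ((∑ i, z i ^ 2) * V) ≤ 1) :
    ∫⁻ u, ENNReal.ofReal (Real.exp (a * (u ⬝ᵥ z) ^ 2)) ∂Measure.pi (fun _ : ι => gaussianReal 0 V)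
      ≤ ENNReal.ofReal √2 := by
  have hpos : 0 ≤ (∑ i, z i ^ 2) * V := by positivity
  rw [lintegral_exp_mul_sq_dotProduct_pi_gaussianReal V z (by nlinarith)]
  refine ENNReal.ofReal_le_ofReal ?_
  rw [one_div, ← Real.sqrt_inv]
  exact Real.sqrt_le_sqrt ((inv_le_comm₀ (by nlinarith) two_pos).mpr (by nlinarith))

theorem exp_sum_div_card_le {κ : Type*} {S : Finset κ} (hS : S.Nonempty) (q : κ → ℝ) :
    Real.exp ((∑ j ∈ S, q j) / #S) ≤ (∑ j ∈ S, Real.exp (q j)) / #S := by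
  have hS0 : (0 : ℝ) < #S := by exact_mod_cast hS.card_pos
  have hw : ∑ _j ∈ S, (1 / #S : ℝ) = 1 := by
    rw [Finset.sum_const, nsmul_eq_mul]; field_simp
  have := convexOn_exp.map_sum_le (t := S) (w := fun _ => (1 / #S : ℝ)) (p := q)
    (fun _ _ => by positivity) hw (fun _ _ => Set.mem_univ _)
  simpa only [smul_eq_mul, one_div, inv_mul_eq_div, ← Finset.sum_div] using this

theorem measure_lt_le_exp_mul_lintegral_exp {α : Type*} [MeasurableSpace α] (μ : Measure α)
    {f : α → ℝ} (hf : AEMeasurable f μ) {c : ℝ} (hc : 0 ≤ c) (t : ℝ) :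
    μ {x | t < f x}
      ≤ ENNReal.ofReal (Real.exp (-(c * t))) * ∫⁻ x, ENNReal.ofReal (Real.exp (c * f x)) ∂μ := by
  calc μ {x | t < f x}
      ≤ μ {x | ENNReal.ofReal (Real.exp (c * t)) ≤ ENNReal.ofReal (Real.exp (c * f x))} :=
        measure_mono fun x hx => ENNReal.ofReal_le_ofReal
          (Real.exp_le_exp.mpr (mul_le_mul_of_nonneg_left (le_of_lt hx) hc))
    _ = ENNReal.ofReal (Real.exp (-(c * t))) * (ENNReal.ofReal (Real.exp (c * t))
          * μ {x | ENNReal.ofReal (Real.exp (c * t)) ≤ ENNReal.ofReal (Real.exp (c * f x))}) := by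
        rw [← mul_assoc, ← ENNReal.ofReal_mul (Real.exp_nonneg _), ← Real.exp_add, neg_add_cancel,
          Real.exp_zero, ENNReal.ofReal_one, one_mul]
    _ ≤ _ := by gcongr; exact mul_meas_ge_le_lintegral₀ (by fun_prop) _

theorem lintegral_exp_mean_sq_vecMul_le {ι κ : Type*} [Fintype ι] (V : ℝ≥0) (Z : Matrix ι κ ℝ)
    {S : Finset κ} (hS : S.Nonempty) {a : ℝ}
    (hZ : ∀ j ∈ S, 4 * a * ((∑ i, Z i j ^ 2) * V) ≤ 1) :
    ∫⁻ u, ENNReal.ofReal (Real.exp ((∑ j ∈ S, a * (u ᵥ* Z) j ^ 2) / #S))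
        ∂Measure.pi (fun _ : ι => gaussianReal 0 V)
      ≤ ENNReal.ofReal √2 := by
  have hS0 : (0 : ℝ) < #S := by exact_mod_cast hS.card_pos
  calc _ ≤ ∫⁻ u, ∑ j ∈ S, ENNReal.ofReal (1 / #S) * ENNReal.ofReal
          (Real.exp (a * (u ᵥ* Z) j ^ 2)) ∂Measure.pi (fun _ : ι => gaussianReal 0 V) := by
        refine lintegral_mono fun u => ?_
        calc _ ≤ ENNReal.ofReal (1 / #S * ∑ j ∈ S, Real.exp (a * (u ᵥ* Z) j ^ 2)) :=
              ENNReal.ofReal_le_ofReal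
                ((exp_sum_div_card_le hS _).trans_eq (one_div_mul_eq_div _ _).symm)
          _ = _ := by
              rw [ENNReal.ofReal_mul (by positivity), ENNReal.ofReal_sum_of_nonneg
                (fun j _ => by positivity), Finset.mul_sum]
    _ = ∑ j ∈ S, ENNReal.ofReal (1 / #S) * ∫⁻ u, ENNReal.ofReal
          (Real.exp (a * (u ᵥ* Z) j ^ 2)) ∂Measure.pi (fun _ : ι => gaussianReal 0 V) := by
        rw [lintegral_finsetSum _ (fun j _ => by fun_prop)]
        exact Finset.sum_congr rfl fun j _ => lintegral_const_mul _ (by fun_prop)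
    _ ≤ ∑ _j ∈ S, ENNReal.ofReal (1 / #S) * ENNReal.ofReal √2 := by
        gcongr with j hj
        exact lintegral_exp_mul_sq_dotProduct_pi_gaussianReal_le V _ (hZ j hj)
    _ = ENNReal.ofReal √2 := by
        rw [← ENNReal.ofReal_mul (by positivity), ← ENNReal.ofReal_sum_of_nonneg
          (fun _ _ => by positivity), Finset.sum_const, nsmul_eq_mul]
        congr 1
        field_simp

/-- Chernoff bound with parameter `1 / (4 #S v V)` on the mean of the `χ²`-type variables
`⟪u, Z_j⟫²`; averaging (rather than a union bound over `S`) makes the bound independent of `#S`. -/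
theorem pi_gaussianReal_sum_sq_vecMul_tail {ι κ : Type*} [Fintype ι] {V : ℝ≥0} (hV : V ≠ 0)
    (Z : Matrix ι κ ℝ) (S : Finset κ) {v : ℝ} (hZ : ∀ j ∈ S, ∑ i, Z i j ^ 2 ≤ v) (s : ℝ) :
    Measure.pi (fun _ : ι => gaussianReal 0 V) {u | 4 * #S * v * V * s < ∑ j ∈ S, (u ᵥ* Z) j ^ 2}
      ≤ ENNReal.ofReal (√2 * Real.exp (-s)) := by
  have hV0 : (0 : ℝ) < V := NNReal.coe_pos.mpr (pos_iff_ne_zero.mpr hV)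
  rcases S.eq_empty_or_nonempty with rfl | hS
  · simp
  obtain ⟨j₀, hj₀⟩ := hS
  rcases ((sum_nonneg fun i _ => sq_nonneg (Z i j₀)).trans (hZ j₀ hj₀)).eq_or_lt with rfl | hv
  · have hcol : ∀ u, ∀ j ∈ S, (u ᵥ* Z) j = 0 := by
      intro u j hj
      have := (Finset.sum_eq_zero_iff_of_nonneg (fun i _ => sq_nonneg (Z i j))).mp
        (le_antisymm (hZ j hj) (by positivity))
      simp_all [vecMul, dotProduct]
    have hzero : ∀ u, ∑ j ∈ S, (u ᵥ* Z) j ^ 2 = 0 := fun u =>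
      Finset.sum_eq_zero fun j hj => by rw [hcol u j hj]; ring
    simp [hzero]
  have hS0 : (0 : ℝ) < #S := by exact_mod_cast Finset.card_pos.mpr ⟨j₀, hj₀⟩
  set a : ℝ := 1 / (4 * v * V) with ha
  calc _ ≤ ENNReal.ofReal (Real.exp (-(a / #S * (4 * #S * v * V * s))))
          * ∫⁻ u, ENNReal.ofReal (Real.exp (a / #S * ∑ j ∈ S, (u ᵥ* Z) j ^ 2))
            ∂Measure.pi (fun _ : ι => gaussianReal 0 V) :=
        measure_lt_le_exp_mul_lintegral_exp _ (by fun_prop) (by positivity) _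
    _ ≤ ENNReal.ofReal (Real.exp (-s)) * ENNReal.ofReal √2 := by
        gcongr
        · exact le_of_eq (by rw [ha]; field_simp)
        · simp_rw [div_mul_eq_mul_div, Finset.mul_sum]
          refine lintegral_exp_mean_sq_vecMul_le V Z ⟨j₀, hj₀⟩ fun j hj => ?_
          calc 4 * a * ((∑ i, Z i j ^ 2) * V) ≤ 4 * a * (v * V) := by
                gcongr
                exact hZ j hj
            _ = 1 := by rw [ha]; field_simp
    _ = ENNReal.ofReal (√2 * Real.exp (-s)) := by
        rw [← ENNReal.ofReal_mul (Real.exp_nonneg _), mul_comm]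

theorem sqrt_sum_sq_sub_le {κ : Type*} (S : Finset κ) (f g : κ → ℝ) :
    √(∑ j ∈ S, (f j - g j) ^ 2) ≤ √(∑ j ∈ S, f j ^ 2) + √(∑ j ∈ S, g j ^ 2) := by
  have hnorm : ∀ h : κ → ℝ, √(∑ j ∈ S, h j ^ 2) = ‖WithLp.toLp 2 (fun j : S => h j)‖ := by
    intro h
    rw [EuclideanSpace.norm_eq]
    simp [Finset.sum_attach S (fun j => h j ^ 2)]
  rw [hnorm, hnorm, hnorm]
  exact norm_sub_le (WithLp.toLp 2 (fun j : S => f j)) (WithLp.toLp 2 (fun j : S => g j))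

noncomputable def tslaPenalty {ι κ : Type*} [Fintype ι] (α : ℝ) (wt : ι → ℝ) (G : Finset (Finset κ))
    (wg : Finset κ → ℝ) (β : ι → ℝ) (γ : κ → ℝ) : ℝ :=
  (1 - α) * ∑ j, wt j * |β j| + α * ∑ g ∈ G, wg g * √(∑ j ∈ g, γ j ^ 2)

section Penalty

variable {ι κ : Type*} [Fintype ι] {α : ℝ} {wt : ι → ℝ} {G : Finset (Finset κ)}
  {wg : Finset κ → ℝ}

theorem tslaPenalty_sub_le (hα0 : 0 ≤ α) (hα1 : α ≤ 1) (hwt : ∀ j, 0 ≤ wt j)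
    (hwg : ∀ g ∈ G, 0 ≤ wg g) (β β' : ι → ℝ) (γ γ' : κ → ℝ) :
    tslaPenalty α wt G wg (β - β') (γ - γ')
      ≤ tslaPenalty α wt G wg β γ + tslaPenalty α wt G wg β' γ' := by
  have hl1 : ∑ j, wt j * |β j - β' j| ≤ ∑ j, wt j * |β j| + ∑ j, wt j * |β' j| := by
    rw [← Finset.sum_add_distrib]
    gcongr with j
    rw [← mul_add]
    exact mul_le_mul_of_nonneg_left (abs_sub _ _) (hwt j)
  have hl2 : ∑ g ∈ G, wg g * √(∑ j ∈ g, (γ j - γ' j) ^ 2)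
      ≤ ∑ g ∈ G, wg g * √(∑ j ∈ g, γ j ^ 2) + ∑ g ∈ G, wg g * √(∑ j ∈ g, γ' j ^ 2) := by
    rw [← Finset.sum_add_distrib]
    refine Finset.sum_le_sum fun g hg => ?_
    rw [← mul_add]
    exact mul_le_mul_of_nonneg_left (sqrt_sum_sq_sub_le g γ γ') (hwg g hg)
  simp only [tslaPenalty, Pi.sub_apply]
  linarith [mul_le_mul_of_nonneg_left hl1 (sub_nonneg.mpr hα1), mul_le_mul_of_nonneg_left hl2 hα0]

theorem dotProduct_le_mul_sum_mul_abs {c : ℝ} {w : ι → ℝ} (hw : ∀ j, |w j| ≤ c * wt j)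
    (β : ι → ℝ) : w ⬝ᵥ β ≤ c * ∑ j, wt j * |β j| := by
  rw [Finset.mul_sum]
  refine Finset.sum_le_sum fun j _ => ?_
  calc w j * β j ≤ |w j| * |β j| := (le_abs_self _).trans_eq (abs_mul _ _)
    _ ≤ c * wt j * |β j| := by gcongr; exact hw j
    _ = c * (wt j * |β j|) := mul_assoc _ _ _

theorem dotProduct_le_mul_sum_mul_sqrt [Fintype κ] [DecidableEq κ]
    (hG : (G : Set (Finset κ)).PairwiseDisjoint id) (hGcover : G.biUnion id = univ) {c : ℝ}
    {w : κ → ℝ}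
    (hw : ∀ g ∈ G, √(∑ j ∈ g, w j ^ 2) ≤ c * wg g) (γ : κ → ℝ) :
    w ⬝ᵥ γ ≤ c * ∑ g ∈ G, wg g * √(∑ j ∈ g, γ j ^ 2) := by
  rw [dotProduct, ← hGcover, Finset.sum_biUnion hG, Finset.mul_sum]
  refine Finset.sum_le_sum fun g hg => ?_
  calc ∑ j ∈ g, w j * γ j ≤ √(∑ j ∈ g, w j ^ 2) * √(∑ j ∈ g, γ j ^ 2) :=
        Real.sum_mul_le_sqrt_mul_sqrt g w γ
    _ ≤ c * wg g * √(∑ j ∈ g, γ j ^ 2) := by gcongr; exact hw g hg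
    _ = c * (wg g * √(∑ j ∈ g, γ j ^ 2)) := mul_assoc _ _ _

theorem dotProduct_mulVec_le_mul_tslaPenalty [Fintype κ] [DecidableEq κ] (hα0 : 0 ≤ α)
    (hα1 : α ≤ 1) (hG : (G : Set (Finset κ)).PairwiseDisjoint id) (hGcover : G.biUnion id = univ)
    (hwt : ∀ j, 0 ≤ wt j) (hwg : ∀ g ∈ G, 0 ≤ wg g) {c : ℝ} (hc : 0 ≤ c) {w : ι → ℝ}
    {A : Matrix ι κ ℝ} (hcol : ∀ j, w j ^ 2 ≤ (c * wt j) ^ 2)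
    (hgrp : ∀ g ∈ G, ∑ j ∈ g, (w ᵥ* A) j ^ 2 ≤ (c * wg g) ^ 2) (δ : κ → ℝ) :
    w ⬝ᵥ (A *ᵥ δ) ≤ c * tslaPenalty α wt G wg (A *ᵥ δ) δ := by
  have hl1 := dotProduct_le_mul_sum_mul_abs
    (fun j => abs_le_of_sq_le_sq (hcol j) (mul_nonneg hc (hwt j))) (A *ᵥ δ)
  have hl2 := dotProduct_le_mul_sum_mul_sqrt hG hGcover
    (fun g hg => Real.sqrt_le_iff.mpr ⟨mul_nonneg hc (hwg g hg), hgrp g hg⟩) δ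
  rw [← dotProduct_mulVec] at hl2
  simp only [tslaPenalty]
  linarith [mul_le_mul_of_nonneg_left hl1 (sub_nonneg.mpr hα1), mul_le_mul_of_nonneg_left hl2 hα0]

end Penalty

theorem mean_sq_sub_le_of_penalized_le {ι : Type*} [Fintype ι] {N lam Ωhat Ωstar : ℝ} (hN : 0 < N)
    {fhat fstar e : ι → ℝ}
    (hmin : 1 / (2 * N) * ∑ i, (fstar i + e i - fhat i) ^ 2 + lam * Ωhat
      ≤ 1 / (2 * N) * ∑ i, e i ^ 2 + lam * Ωstar)
    (hdual : e ⬝ᵥ (fhat - fstar) ≤ lam * N * (Ωhat + Ωstar)) :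
    1 / N * ∑ i, (fhat i - fstar i) ^ 2 ≤ 4 * lam * Ωstar := by
  have hexpand : ∑ i, (fstar i + e i - fhat i) ^ 2
      = ∑ i, e i ^ 2 - 2 * (e ⬝ᵥ (fhat - fstar)) + ∑ i, (fhat i - fstar i) ^ 2 := by
    simp only [dotProduct, Pi.sub_apply, Finset.mul_sum, ← Finset.sum_sub_distrib,
      ← Finset.sum_add_distrib]
    exact Finset.sum_congr rfl fun i _ => by ring
  rw [hexpand] at hmin
  rw [one_div_mul_eq_div, div_le_iff₀ hN]
  field_simp at hmin
  linarith

/-- For `c = λ n`, the event on which the noise is dominated by the dual norm of the penalty. -/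
noncomputable def noiseEvent {ρ ι κ : Type*} [Fintype ρ] [Fintype ι] (X : Matrix ρ ι ℝ)
    (A : Matrix ι κ ℝ) (G : Finset (Finset κ)) (wt : ι → ℝ) (wg : Finset κ → ℝ) (c : ℝ) :
    Set (ρ → ℝ) :=
  {u | (∀ j, (u ᵥ* X) j ^ 2 ≤ (c * wt j) ^ 2) ∧
    ∀ g ∈ G, ∑ j ∈ g, (u ᵥ* (X * A)) j ^ 2 ≤ (c * wg g) ^ 2}

theorem mean_sq_prediction_error_le_of_mem_noiseEvent {ρ ι κ : Type*} [Fintype ρ] [Fintype ι]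
    [Fintype κ] [DecidableEq κ] {N α lam : ℝ} (hN : 0 < N) (hα0 : 0 ≤ α) (hα1 : α ≤ 1)
    (hlam : 0 ≤ lam)
    {X : Matrix ρ ι ℝ} {A : Matrix ι κ ℝ} {G : Finset (Finset κ)}
    (hG : (G : Set (Finset κ)).PairwiseDisjoint id) (hGcover : G.biUnion id = univ)
    {wt : ι → ℝ} {wg : Finset κ → ℝ} (hwt : ∀ j, 0 ≤ wt j) (hwg : ∀ g ∈ G, 0 ≤ wg g)
    {e : ρ → ℝ} (he : e ∈ noiseEvent X A G wt wg (lam * N))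
    {βhat βstar : ι → ℝ} {γhat γstar : κ → ℝ} (hβhat : βhat = A *ᵥ γhat)
    (hβstar : βstar = A *ᵥ γstar)
    (hmin : 1 / (2 * N) * ∑ i, ((X *ᵥ βstar + e) i - (X *ᵥ βhat) i) ^ 2
        + lam * tslaPenalty α wt G wg βhat γhat
      ≤ 1 / (2 * N) * ∑ i, ((X *ᵥ βstar + e) i - (X *ᵥ βstar) i) ^ 2
        + lam * tslaPenalty α wt G wg βstar γstar) :
    1 / N * ∑ i, ((X *ᵥ βhat) i - (X *ᵥ βstar) i) ^ 2
      ≤ 4 * lam * tslaPenalty α wt G wg βstar γstar := by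
  obtain ⟨hcol, hgrp⟩ := he
  simp only [Pi.add_apply, add_sub_cancel_left] at hmin
  refine mean_sq_sub_le_of_penalized_le hN hmin ?_
  calc e ⬝ᵥ (X *ᵥ βhat - X *ᵥ βstar) = (e ᵥ* X) ⬝ᵥ (A *ᵥ (γhat - γstar)) := by
        rw [← mulVec_sub, dotProduct_mulVec, hβhat, hβstar, mulVec_sub]
    _ ≤ lam * N * tslaPenalty α wt G wg (A *ᵥ (γhat - γstar)) (γhat - γstar) :=
        dotProduct_mulVec_le_mul_tslaPenalty hα0 hα1 hG hGcover hwt hwg (by positivity) hcol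
          (by simpa only [vecMul_vecMul] using hgrp) _
    _ ≤ lam * N * (tslaPenalty α wt G wg βhat γhat + tslaPenalty α wt G wg βstar γstar) := by
        rw [mulVec_sub, ← hβhat, ← hβstar]
        gcongr
        exact tslaPenalty_sub_le hα0 hα1 hwt hwg _ _ _ _

theorem pi_gaussianReal_noiseEvent_compl_le {ρ ι κ : Type*} [Fintype ρ] [Fintype ι] {V : ℝ≥0}
    (hV : V ≠ 0) (X : Matrix ρ ι ℝ) (A : Matrix ι κ ℝ) (G : Finset (Finset κ)) (wt : ι → ℝ)
    (wg : Finset κ → ℝ) {c v s : ℝ} (hcol : ∀ j, 4 * (∑ i, X i j ^ 2) * V * s ≤ (c * wt j) ^ 2)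
    (hXA : ∀ g ∈ G, ∀ j ∈ g, ∑ i, (X * A) i j ^ 2 ≤ v)
    (hgrp : ∀ g ∈ G, 4 * #g * v * V * s ≤ (c * wg g) ^ 2) :
    Measure.pi (fun _ : ρ => gaussianReal 0 V) (noiseEvent X A G wt wg c)ᶜ
      ≤ (Fintype.card ι + #G) * ENNReal.ofReal (√2 * Real.exp (-s)) := by
  have hcompl : (noiseEvent X A G wt wg c)ᶜ
      = (⋃ j, {u | (c * wt j) ^ 2 < (u ᵥ* X) j ^ 2})
        ∪ ⋃ g ∈ G, {u | (c * wg g) ^ 2 < ∑ j ∈ g, (u ᵥ* (X * A)) j ^ 2} := by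
    ext u
    simp [noiseEvent, imp_iff_not_or]
  rw [hcompl, add_mul]
  refine (measure_union_le _ _).trans (add_le_add ?_ ?_)
  · refine (measure_iUnion_fintype_le _ _).trans ?_
    calc _ ≤ ∑ _j : ι, ENNReal.ofReal (√2 * Real.exp (-s)) := by
          refine Finset.sum_le_sum fun j _ => (measure_mono fun u hu => ?_).trans
            (pi_gaussianReal_sum_sq_vecMul_tail hV X {j} (v := ∑ i, X i j ^ 2) (by simp) s)
          simp only [Set.mem_ofPred_eq, card_singleton, sum_singleton, Nat.cast_one, mul_one]
            at hu ⊢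
          linarith [hcol j]
      _ = _ := by simp
  · refine (measure_biUnion_finset_le G _).trans ?_
    calc _ ≤ ∑ _g ∈ G, ENNReal.ofReal (√2 * Real.exp (-s)) := by
          refine Finset.sum_le_sum fun g hg => (measure_mono fun u hu => ?_).trans
            (pi_gaussianReal_sum_sq_vecMul_tail hV (X * A) g (hXA g hg) s)
          exact (hgrp g hg).trans_lt hu
      _ = _ := by simp

theorem sixteen_mul_mul_sq_mul_le_sq_mul {K σ L N lam : ℝ} (hK : 0 ≤ K) (hσ : 0 ≤ σ)
    (hL : 0 ≤ L) (hN : 0 < N) (hlam : lam ≥ 4 * √K * σ * √(L / N)) :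
    16 * K * σ ^ 2 * L ≤ lam ^ 2 * N := by
  have := pow_le_pow_left₀ (by positivity) hlam 2
  rw [mul_pow, mul_pow, mul_pow, Real.sq_sqrt hK, Real.sq_sqrt (by positivity)] at this
  field_simp at this
  linarith

theorem natCast_add_mul_ofReal_sqrt_two_mul_exp_le {p q : ℕ} (hp : 2 ≤ p) (hq : q ≤ p) :
    ((p : ℝ≥0∞) + q) * ENNReal.ofReal (√2 * Real.exp (-(4 * Real.log p))) ≤ 1 / p := by
  have hp2 : (2 : ℝ) ≤ p := by exact_mod_cast hp
  have hp0 : (0 : ℝ) < p := by linarith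
  have hexp : Real.exp (-(4 * Real.log p)) = ((p : ℝ) ^ 4)⁻¹ := by
    rw [Real.exp_neg, show (4 : ℝ) * Real.log p = Real.log (p ^ 4) by rw [Real.log_pow]; norm_num,
      Real.exp_log (by positivity)]
  have hreal : 2 * p * (√2 * ((p : ℝ) ^ 4)⁻¹) ≤ 1 / p := by
    have hsqrt2 : √2 ≤ 3 / 2 := Real.sqrt_le_iff.mpr ⟨by norm_num, by norm_num⟩
    rw [show 2 * p * (√2 * ((p : ℝ) ^ 4)⁻¹) = 2 * √2 / p ^ 2 * (1 / p) by field_simp]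
    refine mul_le_of_le_one_left (by positivity) ((div_le_one (by positivity)).mpr ?_)
    nlinarith
  calc _ ≤ ENNReal.ofReal (2 * p) * ENNReal.ofReal (√2 * ((p : ℝ) ^ 4)⁻¹) := by
        rw [hexp, ENNReal.ofReal_mul zero_le_two, ENNReal.ofReal_ofNat, ENNReal.ofReal_natCast]
        gcongr
        exact_mod_cast (by omega : p + q ≤ 2 * p)
    _ ≤ ENNReal.ofReal (1 / p) := by
        rw [← ENNReal.ofReal_mul (by positivity)]
        exact ENNReal.ofReal_le_ofReal hreal
    _ = 1 / p := by
        rw [ENNReal.ofReal_div_of_pos hp0, ENNReal.ofReal_one, ENNReal.ofReal_natCast]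

theorem tsla_noiseEvent_compl_le {n p m k : ℕ} (hn : 1 ≤ n) (hp : 2 ≤ p) (hk : 1 ≤ k) {σ : ℝ}
    (hσ : 0 < σ) (X : Matrix (Fin n) (Fin p) ℝ) (A : Matrix (Fin p) (Fin m) ℝ)
    {G : Finset (Finset (Fin m))} (hGcard : #G ≤ p)
    (hXA : ∀ g ∈ G, ∀ j ∈ g, ∀ i, (X * A) i j = 0 ∨ (X * A) i j = 1)
    {wt : Fin p → ℝ} (hwt : ∀ j, wt j = √(∑ i, X i j ^ 2) / √n)
    {wg : Finset (Fin m) → ℝ} (hwg : ∀ g ∈ G, wg g = √((#g : ℝ) / (2 ^ k - 1)))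
    {lam : ℝ} (hlam : lam ≥ 4 * √(2 ^ k - 1) * σ * √(Real.log p / n)) :
    Measure.pi (fun _ : Fin n => gaussianReal 0 ⟨σ ^ 2, sq_nonneg σ⟩)
        (noiseEvent X A G wt wg (lam * n))ᶜ ≤ 1 / p := by
  have hn0 : (0 : ℝ) < n := by exact_mod_cast hn
  have hk1 : (1 : ℝ) ≤ 2 ^ k - 1 := by
    have : (2 : ℝ) ≤ 2 ^ k := le_self_pow₀ one_le_two (by omega)
    linarith
  have hlog : 0 ≤ Real.log p := Real.log_nonneg (by exact_mod_cast (by omega : 1 ≤ p))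
  have hlamsq := sixteen_mul_mul_sq_mul_le_sq_mul (by linarith) hσ.le hlog hn0 hlam
  have h16 : 16 * σ ^ 2 * Real.log p ≤ lam ^ 2 * n := by
    linarith [mul_le_mul_of_nonneg_right hk1 (by positivity : 0 ≤ 16 * σ ^ 2 * Real.log p)]
  have hcol : ∀ j, 4 * (∑ i, X i j ^ 2) * (σ ^ 2) * (4 * Real.log p) ≤ (lam * n * wt j) ^ 2 := by
    intro j
    rw [hwt j, mul_pow, div_pow, Real.sq_sqrt (by positivity), Real.sq_sqrt hn0.le]
    field_simp
    linarith [mul_le_mul_of_nonneg_left h16 (by positivity : (0 : ℝ) ≤ ∑ i, X i j ^ 2)]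
  have hXA_sq : ∀ g ∈ G, ∀ j ∈ g, ∑ i, (X * A) i j ^ 2 ≤ n := by
    intro g hg j hj
    calc ∑ i, (X * A) i j ^ 2 ≤ ∑ _i : Fin n, (1 : ℝ) :=
          Finset.sum_le_sum fun i _ => by rcases hXA g hg j hj i with h | h <;> simp [h]
      _ = n := by simp
  have hgrp : ∀ g ∈ G, 4 * #g * n * (σ ^ 2) * (4 * Real.log p) ≤ (lam * n * wg g) ^ 2 := by
    intro g hg
    rw [hwg g hg, mul_pow, Real.sq_sqrt (by positivity)]
    field_simp
    nlinarith [mul_le_mul_of_nonneg_left hlamsq (by positivity : (0 : ℝ) ≤ n * #g)]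
  have hV : (⟨σ ^ 2, sq_nonneg σ⟩ : ℝ≥0) ≠ 0 := NNReal.coe_ne_zero.mp (pow_ne_zero 2 hσ.ne')
  calc _ ≤ _ := pi_gaussianReal_noiseEvent_compl_le hV X A G wt wg hcol hXA_sq hgrp
    _ ≤ 1 / p := by
        rw [Fintype.card_fin]
        exact natCast_add_mul_ofReal_sqrt_two_mul_exp_le hp hGcard

theorem tsla_prediction_error_bound_general
    (n p m k : ℕ) (hn : 1 ≤ n) (hp : 2 ≤ p) (hk : 1 ≤ k)
    (σ : ℝ) (hσ : 0 < σ) (α : ℝ) (hα0 : 0 ≤ α) (hα1 : α ≤ 1)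
    (X : Matrix (Fin n) (Fin p) ℝ)
    (A : Matrix (Fin p) (Fin m) ℝ)
    (G : Finset (Finset (Fin m)))
    (hGdisj : ∀ g ∈ G, ∀ g' ∈ G, g ≠ g' → g ∩ g' = ∅)
    (hGcover : G.biUnion id = Finset.univ)
    (hGcard : G.card ≤ p)
    (hXg01 : ∀ g ∈ G, ∀ (i : Fin n) (j : Fin m),
      (if j ∈ g then (X * A) i j else 0) = 0 ∨ (if j ∈ g then (X * A) i j else 0) = 1)
    {Ωs : Type*} [MeasurableSpace Ωs] (P : Measure Ωs) [IsProbabilityMeasure P]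
    (ε : Ωs → Fin n → ℝ) (hmeas : Measurable ε)
    (hlaw : Measure.map ε P
      = Measure.pi fun _ : Fin n => gaussianReal 0 ⟨σ ^ 2, sq_nonneg σ⟩)
    (γstar : Fin m → ℝ) (βstar : Fin p → ℝ) (hβstar : βstar = A.mulVec γstar)
    (y : Ωs → Fin n → ℝ) (hy : ∀ ω, y ω = X.mulVec βstar + ε ω)
    (wt : Fin p → ℝ) (hwt : ∀ j, wt j = Real.sqrt (∑ i, X i j ^ 2) / Real.sqrt n)
    (wg : Finset (Fin m) → ℝ)
    (hwg : ∀ g ∈ G, wg g = Real.sqrt ((g.card : ℝ) / ((2 : ℝ) ^ k - 1)))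
    (Om : (Fin p → ℝ) → (Fin m → ℝ) → ℝ)
    (hOm : ∀ β γ, Om β γ
      = (1 - α) * ∑ j, wt j * |β j|
        + α * ∑ g ∈ G, wg g * Real.sqrt (∑ j ∈ g, γ j ^ 2))
    (lam : ℝ)
    (hlam : lam ≥ 4 * Real.sqrt ((2 : ℝ) ^ k - 1) * σ * Real.sqrt (Real.log p / n))
    (βhat : Ωs → Fin p → ℝ) (γhat : Ωs → Fin m → ℝ)
    (hfeas : ∀ ω, βhat ω = A.mulVec (γhat ω))
    (hmin : ∀ ω, ∀ (β : Fin p → ℝ) (γ : Fin m → ℝ), β = A.mulVec γ →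
      (1 / (2 * n)) * ∑ i, (y ω i - X.mulVec (βhat ω) i) ^ 2 + lam * Om (βhat ω) (γhat ω)
        ≤ (1 / (2 * n)) * ∑ i, (y ω i - X.mulVec β i) ^ 2 + lam * Om β γ) :
    P {ω | (1 / n) * ∑ i, (X.mulVec (βhat ω) i - X.mulVec βstar i) ^ 2
          ≤ 4 * lam * Om βstar γstar}
      ≥ 1 - 1 / (p : ℝ≥0∞) - 2 / (p : ℝ≥0∞) ^ 2 := by
  obtain rfl : Om = tslaPenalty α wt G wg := funext fun β => funext (hOm β)
  have hn0 : (0 : ℝ) < n := by exact_mod_cast hn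
  have hwt0 : ∀ j, 0 ≤ wt j := fun j => by rw [hwt j]; positivity
  have hwg0 : ∀ g ∈ G, 0 ≤ wg g := fun g hg => by rw [hwg g hg]; positivity
  have hG : (G : Set (Finset (Fin m))).PairwiseDisjoint id := fun g hg g' hg' hne =>
    Finset.disjoint_iff_inter_eq_empty.mpr (hGdisj g hg g' hg' hne)
  have hXA : ∀ g ∈ G, ∀ j ∈ g, ∀ i, (X * A) i j = 0 ∨ (X * A) i j = 1 := fun g hg j hj i => by
    simpa [hj] using hXg01 g hg i j
  set good := {ω | (1 / n) * ∑ i, (X.mulVec (βhat ω) i - X.mulVec βstar i) ^ 2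
    ≤ 4 * lam * tslaPenalty α wt G wg βstar γstar}
  have hbad : goodᶜ ⊆ ε ⁻¹' (noiseEvent X A G wt wg (lam * n))ᶜ := fun ω hω hnoise =>
    hω (mean_sq_prediction_error_le_of_mem_noiseEvent hn0 hα0 hα1 (le_trans (by positivity) hlam)
      hG hGcover hwt0 hwg0 hnoise (hfeas ω) hβstar (by simpa only [hy] using hmin ω _ _ hβstar))
  have hPbad : P goodᶜ ≤ 1 / p := calc
    P goodᶜ ≤ P.map ε (noiseEvent X A G wt wg (lam * n))ᶜ :=
      (measure_mono hbad).trans (Measure.le_map_apply hmeas.aemeasurable _)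
    _ ≤ 1 / p := hlaw ▸ tsla_noiseEvent_compl_le hn hp hk hσ X A hGcard hXA hwt hwg hlam
  calc 1 - 1 / (p : ℝ≥0∞) - 2 / (p : ℝ≥0∞) ^ 2 ≤ 1 - P goodᶜ :=
        tsub_le_self.trans (tsub_le_tsub_left hPbad 1)
    _ ≤ P good := tsub_le_iff_right.mpr (measure_univ (μ := P) ▸ measure_univ_le_add_compl good)

/-- Theorem 1 (TSLA prediction error bound).  With the expanded binary design matrix `X`
(nonzero `{0,1}` columns), reparameterization matrix `A`, a partition `G` of `{1,…,m}`
into groups of size at most `2^k − 1` with `|G| ≤ p` such that each aggregated matrix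
`X_g = X A P_g` has `{0,1}` entries and at most `p_g = |g|` nonzero columns, i.i.d.
`N(0,σ²)` noise `ε`, `y = Xβ* + ε` with `β* = Aγ*`, weights `w̃_j = ‖x_j‖/√n` and
`w_g = √(p_g/(2^k − 1))`, penalty `Ω(β,γ) = (1−α)∑_j w̃_j|β_j| + α∑_g w_g‖γ_g‖`, and
`λ ≥ 4√(2^k−1) σ √(log p / n)`: if `(β̂, γ̂)` minimizes
`(1/(2n))‖y − Xβ‖² + λΩ(β,γ)` subject to `β = Aγ`, then with probability at least
`1 − 1/p − 2/p²` one has `(1/n)‖Xβ̂ − Xβ*‖² ≤ 4λΩ(β*, γ*)`. -/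
theorem tsla_prediction_error_bound
    (n p m k : ℕ) (hn : 1 ≤ n) (hp : 2 ≤ p) (hm : 1 ≤ m) (hk : 1 ≤ k)
    (σ : ℝ) (hσ : 0 < σ) (α : ℝ) (hα0 : 0 ≤ α) (hα1 : α ≤ 1)
    (X : Matrix (Fin n) (Fin p) ℝ)
    (hX01 : ∀ i j, X i j = 0 ∨ X i j = 1)
    (hXcol : ∀ j : Fin p, (fun i => X i j) ≠ 0)
    (A : Matrix (Fin p) (Fin m) ℝ)
    (G : Finset (Finset (Fin m)))
    (hGne : ∀ g ∈ G, g.Nonempty)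
    (hGdisj : ∀ g ∈ G, ∀ g' ∈ G, g ≠ g' → g ∩ g' = ∅)
    (hGcover : G.biUnion id = Finset.univ)
    (hGcard : G.card ≤ p)
    (hgsize : ∀ g ∈ G, g.card ≤ 2 ^ k - 1)
    (hXg01 : ∀ g ∈ G, ∀ (i : Fin n) (j : Fin m),
      (if j ∈ g then (X * A) i j else 0) = 0 ∨ (if j ∈ g then (X * A) i j else 0) = 1)
    (hXgcols : ∀ g ∈ G,
      (Finset.univ.filter fun j : Fin m =>
        (fun i : Fin n => if j ∈ g then (X * A) i j else 0) ≠ 0).card ≤ g.card)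
    {Ωs : Type*} [MeasurableSpace Ωs] (P : Measure Ωs) [IsProbabilityMeasure P]
    (ε : Ωs → Fin n → ℝ) (hmeas : Measurable ε)
    (hlaw : Measure.map ε P
      = Measure.pi fun _ : Fin n => gaussianReal 0 ⟨σ ^ 2, sq_nonneg σ⟩)
    (γstar : Fin m → ℝ) (βstar : Fin p → ℝ) (hβstar : βstar = A.mulVec γstar)
    (y : Ωs → Fin n → ℝ) (hy : ∀ ω, y ω = X.mulVec βstar + ε ω)
    (wt : Fin p → ℝ) (hwt : ∀ j, wt j = Real.sqrt (∑ i, X i j ^ 2) / Real.sqrt n)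
    (wg : Finset (Fin m) → ℝ)
    (hwg : ∀ g ∈ G, wg g = Real.sqrt ((g.card : ℝ) / ((2 : ℝ) ^ k - 1)))
    (Om : (Fin p → ℝ) → (Fin m → ℝ) → ℝ)
    (hOm : ∀ β γ, Om β γ
      = (1 - α) * ∑ j, wt j * |β j|
        + α * ∑ g ∈ G, wg g * Real.sqrt (∑ j ∈ g, γ j ^ 2))
    (lam : ℝ)
    (hlam : lam ≥ 4 * Real.sqrt ((2 : ℝ) ^ k - 1) * σ * Real.sqrt (Real.log p / n))
    (βhat : Ωs → Fin p → ℝ) (γhat : Ωs → Fin m → ℝ)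
    (hfeas : ∀ ω, βhat ω = A.mulVec (γhat ω))
    (hmin : ∀ ω, ∀ (β : Fin p → ℝ) (γ : Fin m → ℝ), β = A.mulVec γ →
      (1 / (2 * n)) * ∑ i, (y ω i - X.mulVec (βhat ω) i) ^ 2 + lam * Om (βhat ω) (γhat ω)
        ≤ (1 / (2 * n)) * ∑ i, (y ω i - X.mulVec β i) ^ 2 + lam * Om β γ) :
    P {ω | (1 / n) * ∑ i, (X.mulVec (βhat ω) i - X.mulVec βstar i) ^ 2
          ≤ 4 * lam * Om βstar γstar}
      ≥ 1 - 1 / (p : ℝ≥0∞) - 2 / (p : ℝ≥0∞) ^ 2 :=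
  tsla_prediction_error_bound_general n p m k hn hp hk σ hσ α hα0 hα1 X A G hGdisj hGcover hGcard
    hXg01 P ε hmeas hlaw γstar βstar hβstar y hy wt hwt wg hwg Om hOm lam hlam βhat γhat hfeas hmin
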